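/- Let D be a nontrivial regular (216, 40, 4, 8)-PDS in the group G = (ℤ/2ℤ)³ × (ℤ/3ℤ)³. Then the number of elements of order 2 in D is either 0 or 4. -/

import Mathlib

/-- The number of representations of `g` as `a * b⁻¹` with `a, b ∈ D`. -/
def diffReps {G : Type*} [Group G] [DecidableEq G] (D : Finset G) (g : G) : ℕ :=
  ((D ×ˢ D).filter (fun p => p.1 * p.2⁻¹ = g)).card

/-- `D` is a `(v, k, λ, μ)`-partial difference set in the finite group `G`. -/
def IsPDS {G : Type*} [Group G] [Fintype G] [DecidableEq G]
    (D : Finset G) (v k l m : ℕ) : Prop :=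
  Fintype.card G = v ∧ D.card = k ∧
  ∀ g : G, g ≠ 1 →
    (g ∈ D → diffReps D g = l) ∧ (g ∉ D → diffReps D g = m)

/-- `D` is regular: it does not contain the identity and is closed under inverses. -/
def IsRegularPDS {G : Type*} [Group G] (D : Finset G) : Prop :=
  (1 : G) ∉ D ∧ ∀ d : G, d ∈ D ↔ d⁻¹ ∈ D

/-- A regular PDS `D` is trivial if `D ∪ {e}` or `G \ D` is a subgroup of `G`. -/
def IsTrivialPDS {G : Type*} [Group G] (D : Finset G) : Prop :=
  (∃ H : Subgroup G, (H : Set G) = insert (1 : G) ↑D) ∨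
  (∃ H : Subgroup G, (H : Set G) = (↑D : Set G)ᶜ)

/-- The group `(ℤ/2ℤ)³ × (ℤ/3ℤ)³`, written multiplicatively. -/
abbrev G216 : Type := Multiplicative ((Fin 3 → ZMod 2) × (Fin 3 → ZMod 3))

/-!
Let `P ≅ (ℤ/2)³` be the Sylow 2-subgroup; the involutions of `D` are exactly `D ∩ P`. The characters
trivial on `P` are the characters `ψ` of `(ℤ/3)³` composed with the projection. For nontrivial `ψ`
the PDS equation `D² = 4D + 8(G - D) + 32e` in the group ring gives `ψ(D)² = -4 ψ(D) + 32`, so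
`ψ(D) ∈ {4, -8}`; by orthogonality the 27 values `ψ(D)` sum to `27 |D ∩ P|`. Thus
`27 |D ∩ P| = 40 + 26 · 4 - 12 e`, where `e` counts the characters with `ψ(D) = -8`, so
`|D ∩ P| ≡ 0 mod 4` and `|D ∩ P| ≤ 5`.
-/

open Finset

section PartialDifferenceSet

variable {G : Type*} [Group G]

theorem IsRegularPDS.sum_inv {M : Type*} [AddCommMonoid M] {D : Finset G}
    (hreg : IsRegularPDS D) (f : G → M) : ∑ b ∈ D, f b⁻¹ = ∑ b ∈ D, f b :=
  sum_nbij' (·⁻¹) (·⁻¹) (fun b hb => (hreg.2 b).mp hb)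
    (fun b hb => (hreg.2 b).mp hb) (by simp) (by simp) (by simp)

variable [DecidableEq G]

theorem diffReps_one (D : Finset G) : diffReps D 1 = #D := by
  simp only [diffReps, ← diag_card D, diag_eq_filter, mul_inv_eq_one]

variable [Fintype G] {R : Type*} [CommRing R]

theorem sum_diffReps_mul (D : Finset G) (χ : G →* R) :
    ∑ g, (diffReps D g : R) * χ g = (∑ a ∈ D, χ a) * ∑ b ∈ D, χ b⁻¹ := by
  rw [sum_mul_sum, ← sum_product', ← sum_fiberwise (D ×ˢ D) (fun p => p.1 * p.2⁻¹)]
  refine sum_congr rfl fun g _ => ?_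
  rw [sum_congr rfl fun p hp => by rw [← map_mul, (mem_filter.mp hp).2], sum_const,
    nsmul_eq_mul, diffReps]

theorem IsPDS.diffReps_eq {D : Finset G} {v k l m : ℕ} (hD : IsPDS D v k l m)
    (hreg : IsRegularPDS D) (g : G) :
    (diffReps D g : R) =
      m + (if g ∈ D then (l - m : R) else 0) + (if g = 1 then (k - m : R) else 0) := by
  rcases eq_or_ne g 1 with rfl | hg
  · simp [diffReps_one, hD.2.1, hreg.1]
  · by_cases hgD : g ∈ D
    · simp [(hD.2.2 g hg).1 hgD, hgD, hg]
    · simp [(hD.2.2 g hg).2 hgD, hgD, hg]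

theorem IsPDS.sq_sum_char {D : Finset G} {v k l m : ℕ} (hD : IsPDS D v k l m)
    (hreg : IsRegularPDS D) (χ : G →* R) (hχ : ∑ g, χ g = 0) :
    (∑ d ∈ D, χ d) ^ 2 = (l - m) * ∑ d ∈ D, χ d + (k - m) := by
  have hsum := sum_diffReps_mul D χ
  rw [hreg.sum_inv (χ ·)] at hsum
  simp only [hD.diffReps_eq hreg, add_mul, ite_mul, zero_mul, sum_add_distrib, ← mul_sum, hχ,
    sum_ite_eq', mem_univ, if_true, map_one, sum_ite_mem, univ_inter] at hsum
  linear_combination -hsum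

end PartialDifferenceSet

section CharactersThroughQuotient

variable {G A : Type*} [AddCommGroup A]

theorem sum_addChar_sum_eq_card_mul_card_filter [Fintype A] [DecidableEq A] (D : Finset G) (π : G → A) :
    ∑ ψ : AddChar A ℂ, ∑ d ∈ D, ψ (π d) = Fintype.card A * #{d ∈ D | π d = 0} := by
  rw [sum_comm]
  simp only [AddChar.sum_apply_eq_ite, sum_ite, sum_const_zero, add_zero, sum_const,
    nsmul_eq_mul, mul_comm]

theorem sum_addChar_comp_eq_zero [Group G] [Fintype G] (π : G →* Multiplicative A)
    (hπ : Function.Surjective π) {ψ : AddChar A ℂ} (hψ : ψ ≠ 0) :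
    ∑ g, ψ.toMonoidHom.comp π g = 0 := by
  refine sum_hom_units_eq_zero _ fun h => hψ (DFunLike.ext _ _ fun a => ?_)
  obtain ⟨g, hg⟩ := hπ (Multiplicative.ofAdd a)
  simpa [hg] using DFunLike.congr_fun h g

end CharactersThroughQuotient

theorem IsPDS.sum_addChar_eq_four_or_eq_neg_eight {G A : Type*} [Group G] [Fintype G]
    [DecidableEq G] [AddCommGroup A] [Fintype A] {D : Finset G} {v : ℕ}
    (hD : IsPDS D v 40 4 8) (hreg : IsRegularPDS D) (π : G →* Multiplicative A)
    (hπ : Function.Surjective π) {ψ : AddChar A ℂ} (hψ : ψ ≠ 0) :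
    ∑ d ∈ D, ψ (π d).toAdd = 4 ∨ ∑ d ∈ D, ψ (π d).toAdd = -8 := by
  have hsq := hD.sq_sum_char hreg _ (sum_addChar_comp_eq_zero π hπ hψ)
  simp only [MonoidHom.comp_apply, AddChar.toMonoidHom_apply] at hsq
  have : (∑ d ∈ D, ψ (π d).toAdd - 4) * (∑ d ∈ D, ψ (π d).toAdd + 8) = 0 := by
    linear_combination hsq
  rcases mul_eq_zero.mp this with h | h
  · exact .inl (by linear_combination h)
  · exact .inr (by linear_combination h)

theorem sum_eq_card_mul_add_of_forall_eq_or_eq {ι R : Type*} [CommRing R] [DecidableEq R]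
    {s : Finset ι} {f : ι → R} {a b : R} (h : ∀ i ∈ s, f i = a ∨ f i = b) :
    ∑ i ∈ s, f i = #s * a + #{i ∈ s | f i = b} * (b - a) := by
  have hsplit : ∀ i ∈ s, f i = a + if f i = b then b - a else 0 := fun i hi => by
    split_ifs with hb
    · rw [hb]; ring
    · exact (h i hi).resolve_right hb |>.trans (add_zero a).symm
  rw [sum_congr rfl hsplit, sum_add_distrib, ← sum_filter, sum_const, sum_const, nsmul_eq_mul,
    nsmul_eq_mul]

def threePart : G216 →* Multiplicative (Fin 3 → ZMod 3) :=
  AddMonoidHom.toMultiplicative (AddMonoidHom.snd _ _)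

theorem threePart_surjective : Function.Surjective threePart :=
  fun y => ⟨Multiplicative.ofAdd (0, y.toAdd), rfl⟩

theorem sq_eq_one_iff_threePart_eq_one (g : G216) : g ^ 2 = 1 ↔ threePart g = 1 := by
  have h2 : ∀ x : Fin 3 → ZMod 2, 2 • x = 0 := by decide
  have h3 : ∀ y : Fin 3 → ZMod 3, 2 • y = 0 ↔ y = 0 := by decide
  rcases g with ⟨x, y⟩
  show (2 • x, 2 • y) = (0, 0) ↔ y = 0
  simp only [Prod.mk.injEq, h2, h3, true_and]

theorem orderOf_eq_two_iff_threePart_eq_one {g : G216} (hg : g ≠ 1) :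
    orderOf g = 2 ↔ threePart g = 1 := by
  rw [orderOf_eq_prime_iff, sq_eq_one_iff_threePart_eq_one, and_iff_left hg]

theorem involutions_in_40_PDS_general (D : Finset G216)
    (hD : IsPDS D 216 40 4 8) (hreg : IsRegularPDS D) :
    (D.filter (fun d => orderOf d = 2)).card = 0 ∨
    (D.filter (fun d => orderOf d = 2)).card = 4 := by
  classical
  set t := #{d ∈ D | (threePart d).toAdd = 0}
  have ht : #{d ∈ D | orderOf d = 2} = t := congrArg card <| filter_congr fun d hd => by
    rw [orderOf_eq_two_iff_threePart_eq_one (ne_of_mem_of_not_mem hd hreg.1), toAdd_eq_zero]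
  set S : AddChar (Fin 3 → ZMod 3) ℂ → ℂ := fun ψ => ∑ d ∈ D, ψ (threePart d).toAdd
  have hS0 : S 0 = 40 := by simp [S, hD.2.1]
  have hS : ∀ ψ ∈ univ.erase 0, S ψ = 4 ∨ S ψ = -8 := fun ψ hψ =>
    hD.sum_addChar_eq_four_or_eq_neg_eight hreg threePart threePart_surjective
      (ne_of_mem_erase hψ)
  have hcount : ∑ ψ, S ψ = 27 * t := by
    simp [S, sum_addChar_sum_eq_card_mul_card_filter, t]
  have hcard : Fintype.card (Fin 3 → ZMod 3) = 27 := by simp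
  rw [← add_sum_erase _ _ (mem_univ 0), sum_eq_card_mul_add_of_forall_eq_or_eq hS, hS0,
    card_erase_of_mem (mem_univ _), card_univ, AddChar.card_eq, hcard] at hcount
  have hnat : 27 * t + 12 * #{ψ ∈ univ.erase 0 | S ψ = -8} = 144 := by
    have hcast : ((27 * t + 12 * #{ψ ∈ univ.erase 0 | S ψ = -8} : ℕ) : ℂ) = (144 : ℕ) := by
      push_cast
      linear_combination -hcount
    exact_mod_cast hcast
  omega

/-- A nontrivial regular `(216,40,4,8)`-PDS in `(ℤ/2ℤ)³ × (ℤ/3ℤ)³` contains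
either 0 or 4 elements of order 2. -/
theorem involutions_in_40_PDS (D : Finset G216)
    (hD : IsPDS D 216 40 4 8) (hreg : IsRegularPDS D) (hnt : ¬ IsTrivialPDS D) :
    (D.filter (fun d => orderOf d = 2)).card = 0 ∨
    (D.filter (fun d => orderOf d = 2)).card = 4 :=
  involutions_in_40_PDS_general D hD hreg
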